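/- Under hypotheses (S) and (B), for every K > 0 and all integers a, α ≥ 0 there exists C > 0 such that for all x' ∈ U', all ξ' ∈ ℝ^{n−1} and all (t, τ) ∈ ℝ²: |∂_t^a ∂_τ^α *Φ(t, τ)| ≤ C ⟨t⟩^{1−a} ⟨τ⟩^{1−α}. (Property (P1) of a regular SG phase function, with constants independent of (x', ξ') ∈ U' × ℝ^{n−1}; this is part of Theorem 1.2.) -/

import Mathlib

/-!
Write `r = ⟨ξ'⟩` and `s = t / r`. By (B), `φ` and all its `ξₙ`-derivatives vanish at `xₙ = 0`,
so the mean value theorem and (S) give `∂_{ξₙ}^α φ(x', s, ξ', τ r) = O(|s| (r⟨τ⟩)^{1-α})`,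
while every `xₙ`-derivative of order `≥ 1` is `O((r⟨τ⟩)^{1-α})`. After the factor `r^α` coming
from the chain rule in `τ`, the part of `∂_τ^α *Φ` carrying the cut-off is `ω(s) h(s)`, where
`h = cutoffPart` satisfies `h(s) = O(|t| ⟨τ⟩^{1-α})` and `h^{(m)}(s) = O(r ⟨τ⟩^{1-α})`.
Each `t`-derivative of `ω(t/r) h(t/r)` produces a factor `r⁻¹`, and on the support `|t| ≤ r`
we have `⟨t⟩ ≤ 2r`, hence `r^{1-a} ≤ 2^a ⟨t⟩^{1-a}` for `a ≥ 1`; for `a = 0` the factor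
`|t| ≤ ⟨t⟩` supplied by (B) is exactly what is needed. The remaining part `K t ∂_τ^α τ` has
explicit derivatives.
-/

noncomputable section

open Real MeasureTheory

/-- Japanese bracket of a real number: `⟨t⟩ = √(1+t²)`. -/
def jb (t : ℝ) : ℝ := Real.sqrt (1 + t ^ 2)

/-- Japanese bracket of a vector in `ℝᵏ` (Euclidean norm). -/
def jbV {k : ℕ} (v : Fin k → ℝ) : ℝ := Real.sqrt (1 + ∑ i, v i ^ 2)

/-- Japanese bracket of the full covariable `(ξ', ξₙ) ∈ ℝᵏ⁺¹`. -/
def jbP {k : ℕ} (v : Fin k → ℝ) (t : ℝ) : ℝ := Real.sqrt (1 + (∑ i, v i ^ 2) + t ^ 2)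

/-- Euclidean norm of a vector in `ℝᵏ`. -/
def enormV {k : ℕ} (v : Fin k → ℝ) : ℝ := Real.sqrt (∑ i, v i ^ 2)

/-- Euclidean norm of the full covariable `(ξ', ξₙ)`. -/
def enormP {k : ℕ} (v : Fin k → ℝ) (t : ℝ) : ℝ := Real.sqrt ((∑ i, v i ^ 2) + t ^ 2)

/-- Functions of `(x', xₙ, ξ', ξₙ)` with values in `E`. -/
abbrev Fn (k : ℕ) (E : Type*) := (Fin k → ℝ) → ℝ → (Fin k → ℝ) → ℝ → E

/-- The uncurried version of `f : Fn k E`. -/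
def Fn.unc {k : ℕ} {E : Type*} (f : Fn k E) :
    ((Fin k → ℝ) × ℝ × (Fin k → ℝ) × ℝ) → E :=
  fun p => f p.1 p.2.1 p.2.2.1 p.2.2.2

section Derivs

variable {k : ℕ} {E : Type*} [NormedAddCommGroup E] [NormedSpace ℝ E]

/-- Partial derivative in `xₙ`. -/
def Dxn (f : Fn k E) : Fn k E := fun x' xn ξ' ξn => deriv (fun t => f x' t ξ' ξn) xn

/-- Partial derivative in `ξₙ`. -/
def Dxin (f : Fn k E) : Fn k E := fun x' xn ξ' ξn => deriv (fun t => f x' xn ξ' t) ξn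

/-- Partial derivative in the `i`-th coordinate of `x'`. -/
def Dxp (i : Fin k) (f : Fn k E) : Fn k E :=
  fun x' xn ξ' ξn => deriv (fun t => f (Function.update x' i t) xn ξ' ξn) (x' i)

/-- Partial derivative in the `i`-th coordinate of `ξ'`. -/
def Dxip (i : Fin k) (f : Fn k E) : Fn k E :=
  fun x' xn ξ' ξn => deriv (fun t => f x' xn (Function.update ξ' i t) ξn) (ξ' i)

/-- Multi-index partial derivative `∂ₓ'^β`. -/
def DxpM (β : Fin k → ℕ) (f : Fn k E) : Fn k E :=
  (List.finRange k).foldr (fun i g => (Dxp i)^[β i] g) f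

/-- Multi-index partial derivative `∂_ξ'^α`. -/
def DxipM (α : Fin k → ℕ) (f : Fn k E) : Fn k E :=
  (List.finRange k).foldr (fun i g => (Dxip i)^[α i] g) f

/-- Partial derivative in the first of two real variables. -/
def D1 (F : ℝ → ℝ → E) : ℝ → ℝ → E := fun s t => deriv (fun u => F u t) s

/-- Partial derivative in the second of two real variables. -/
def D2 (F : ℝ → ℝ → E) : ℝ → ℝ → E := fun s t => deriv (fun u => F s u) t

end Derivs

/-- The cut-off function `ω`: smooth, even, non-increasing on `[0,∞)`,
`≡ 1` on `[-1/2,1/2]`, `≡ 0` outside `(-1,1)`. -/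
def CutOff (ω : ℝ → ℝ) : Prop :=
  ContDiff ℝ (⊤ : ℕ∞) ω ∧ (∀ t, ω (-t) = ω t) ∧ AntitoneOn ω (Set.Ici 0) ∧
    (∀ t : ℝ, |t| ≤ 1 / 2 → ω t = 1) ∧ (∀ t : ℝ, 1 ≤ |t| → ω t = 0)

/-- `φ := ψ − ψ_∂`, where `ψ_∂(x',ξ') = ψ(x',0,ξ',0)`. -/
def phiOf {k : ℕ} (ψ : Fn k ℝ) : Fn k ℝ :=
  fun x' xn ξ' ξn => ψ x' xn ξ' ξn - ψ x' 0 ξ' 0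

/-- Hypothesis (S): symbol estimates of order `1` for `ψ`, for `x' ∈ Ω'`, `|xₙ| ≤ 2`. -/
def HypS {k : ℕ} (Ω' : Set (Fin k → ℝ)) (ψ : Fn k ℝ) : Prop :=
  ∀ (a b : ℕ) (α β : Fin k → ℕ), ∃ C > 0, ∀ x' ∈ Ω', ∀ xn : ℝ, |xn| ≤ 2 →
    ∀ (ξ' : Fin k → ℝ) (ξn : ℝ),
      |DxpM β ((Dxn)^[b] (DxipM α ((Dxin)^[a] ψ))) x' xn ξ' ξn| ≤
        C * jbP ξ' ξn ^ ((1 : ℝ) - ((a : ℝ) + ∑ i, (α i : ℝ)))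

/-- Hypothesis (B): `∂_{ξₙ}ψ(x',0,ξ',ξₙ) = 0` for `x' ∈ Ω'`. -/
def HypB {k : ℕ} (Ω' : Set (Fin k → ℝ)) (ψ : Fn k ℝ) : Prop :=
  ∀ x' ∈ Ω', ∀ (ξ' : Fin k → ℝ) (ξn : ℝ), Dxin ψ x' 0 ξ' ξn = 0

/-- The rescaled phase function `*Φ`. -/
def PhiS {k : ℕ} (ω : ℝ → ℝ) (K : ℝ) (ψ : Fn k ℝ) (x' ξ' : Fin k → ℝ) (t τ : ℝ) : ℝ :=
  ω (t / jbV ξ') * phiOf ψ x' (t / jbV ξ') ξ' (τ * jbV ξ')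
    + (1 - ω (t / jbV ξ')) * K * t * τ

section Brackets

variable {k : ℕ}

theorem jb_pos (t : ℝ) : 0 < jb t := Real.sqrt_pos.2 (by positivity)

theorem jb_rpow_pos (t e : ℝ) : 0 < jb t ^ e := Real.rpow_pos_of_pos (jb_pos t) e

theorem abs_le_jb (t : ℝ) : |t| ≤ jb t := by
  rw [← Real.sqrt_sq_eq_abs]
  exact Real.sqrt_le_sqrt (by linarith)

theorem jb_le_one_add_abs (t : ℝ) : jb t ≤ 1 + |t| :=
  Real.sqrt_le_iff.2 ⟨by positivity, by nlinarith [sq_abs t, abs_nonneg t]⟩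

theorem one_le_jbV (ξ' : Fin k → ℝ) : 1 ≤ jbV ξ' :=
  Real.one_le_sqrt.2 (le_add_of_nonneg_right (Finset.sum_nonneg fun _ _ => sq_nonneg _))

theorem jbP_mul_jbV (ξ' : Fin k → ℝ) (τ : ℝ) : jbP ξ' (τ * jbV ξ') = jbV ξ' * jb τ := by
  have hS : 0 ≤ 1 + ∑ i, ξ' i ^ 2 := by positivity
  rw [jbP, jbV, jb, mul_pow, Real.sq_sqrt hS, ← Real.sqrt_mul hS]
  ring_nf

theorem rpow_one_sub_le_two_pow_mul_jb_rpow {r t : ℝ} (hr : 1 ≤ r) (ht : |t| ≤ r) {a : ℕ}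
    (ha : 1 ≤ a) : r ^ ((1 : ℝ) - a) ≤ 2 ^ a * jb t ^ ((1 : ℝ) - a) := by
  have hr0 : 0 < r := by linarith
  have ha' : (1 : ℝ) ≤ a := by exact_mod_cast ha
  calc r ^ ((1 : ℝ) - a) = 2 ^ ((a : ℝ) - 1) * (2 * r) ^ ((1 : ℝ) - a) := by
        rw [Real.mul_rpow zero_le_two hr0.le, ← mul_assoc, ← Real.rpow_add zero_lt_two]
        simp
    _ ≤ 2 ^ ((a : ℝ) - 1) * jb t ^ ((1 : ℝ) - a) := by
        refine mul_le_mul_of_nonneg_left ?_ (by positivity)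
        exact Real.rpow_le_rpow_of_nonpos (jb_pos t)
          ((jb_le_one_add_abs t).trans (by linarith : 1 + |t| ≤ 2 * r))
          (by linarith : (1 : ℝ) - a ≤ 0)
    _ ≤ 2 ^ a * jb t ^ ((1 : ℝ) - a) := by
        refine mul_le_mul_of_nonneg_right ?_ (jb_rpow_pos t _).le
        rw [← Real.rpow_natCast]
        exact Real.rpow_le_rpow_of_exponent_le one_le_two (by linarith)

theorem jbV_pow_mul_jbP_rpow (ξ' : Fin k → ℝ) (τ : ℝ) (α : ℕ) :
    jbV ξ' ^ α * jbP ξ' (τ * jbV ξ') ^ ((1 : ℝ) - α) = jbV ξ' * jb τ ^ ((1 : ℝ) - α) := by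
  have hr : 0 < jbV ξ' := zero_lt_one.trans_le (one_le_jbV ξ')
  rw [jbP_mul_jbV, Real.mul_rpow hr.le (jb_pos τ).le, ← mul_assoc, ← Real.rpow_natCast,
    ← Real.rpow_add hr]
  simp

end Brackets

section OneVariable

theorem abs_iteratedDeriv_id_le (a : ℕ) (t : ℝ) :
    |iteratedDeriv a (fun u : ℝ => u) t| ≤ jb t ^ ((1 : ℝ) - a) := by
  rw [iteratedDeriv_fun_id]
  rcases a with _ | _ | a
  · simpa using abs_le_jb t
  · norm_num
  · simpa using (jb_rpow_pos t _).le

theorem abs_iteratedDeriv_id_le_one {a : ℕ} (ha : a ≠ 0) (t : ℝ) :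
    |iteratedDeriv a (fun u : ℝ => u) t| ≤ 1 := by
  rw [iteratedDeriv_fun_id]
  split_ifs <;> simp_all

theorem abs_iteratedDeriv_mul_le {f g : ℝ → ℝ} {a : ℕ} {s M B : ℝ} (hf : ContDiffAt ℝ a f s)
    (hg : ContDiffAt ℝ a g s) (hM : ∀ j ≤ a, |iteratedDeriv j f s| ≤ M)
    (hB : ∀ j ≤ a, |iteratedDeriv j g s| ≤ B) :
    |iteratedDeriv a (fun u => f u * g u) s| ≤ 2 ^ a * M * B := by
  have hM0 : 0 ≤ M := (abs_nonneg _).trans (hM 0 (Nat.zero_le a))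
  rw [iteratedDeriv_fun_mul hf hg]
  calc |∑ j ∈ Finset.range (a + 1),
          (a.choose j : ℝ) * iteratedDeriv j f s * iteratedDeriv (a - j) g s|
      ≤ ∑ j ∈ Finset.range (a + 1), (a.choose j : ℝ) * (M * B) := by
        refine (Finset.abs_sum_le_sum_abs _ _).trans (Finset.sum_le_sum fun j hj => ?_)
        have hj : j ≤ a := Finset.mem_range_succ_iff.1 hj
        rw [abs_mul, abs_mul, Nat.abs_cast, mul_assoc]
        exact mul_le_mul_of_nonneg_left
          (mul_le_mul (hM j hj) (hB _ (Nat.sub_le a j)) (abs_nonneg _) hM0) (Nat.cast_nonneg _)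
    _ = 2 ^ a * M * B := by
        rw [← Finset.sum_mul, ← Nat.cast_sum, Nat.sum_range_choose]
        push_cast
        ring

theorem ContDiff.exists_abs_iteratedDeriv_le_of_abs_le_one {w : ℝ → ℝ} (hw : ContDiff ℝ (⊤ : ℕ∞) w)
    (N : ℕ) : ∃ M > 0, ∀ j ≤ N, ∀ s : ℝ, |s| ≤ 1 → |iteratedDeriv j w s| ≤ M := by
  have hev : ∀ j, ∀ᶠ M in Filter.atTop, ∀ s : ℝ, |s| ≤ 1 → |iteratedDeriv j w s| ≤ M := by
    intro j
    obtain ⟨M₀, hM₀⟩ := (isCompact_Icc (a := (-1 : ℝ)) (b := 1)).exists_bound_of_continuousOn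
      (hw.continuous_iteratedDeriv j (by exact_mod_cast le_top)).continuousOn
    filter_upwards [Filter.eventually_ge_atTop M₀] with M hM s hs
    exact (hM₀ s (abs_le.1 hs)).trans hM
  obtain ⟨M, hM0, hM⟩ := ((Filter.eventually_gt_atTop 0).and
    ((Finset.range (N + 1)).eventually_all.2 fun j _ => hev j)).exists
  exact ⟨M, hM0, fun j hj => hM j (Finset.mem_range_succ_iff.2 hj)⟩

theorem iteratedDeriv_comp_div {F : ℝ → ℝ} (hF : ContDiff ℝ (⊤ : ℕ∞) F) (a : ℕ) (r t : ℝ) :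
    iteratedDeriv a (fun u => F (u / r)) t = (r⁻¹) ^ a * iteratedDeriv a F (t / r) := by
  simp_rw [div_eq_inv_mul]
  exact congrFun (iteratedDeriv_comp_const_mul (hF.of_le (by exact_mod_cast le_top)) r⁻¹) t

theorem iteratedDeriv_comp_div_eq_zero {F : ℝ → ℝ} (hF : ∀ s, 1 ≤ |s| → F s = 0) (a : ℕ)
    {r t : ℝ} (hr : 0 < r) (ht : r < |t|) : iteratedDeriv a (fun u => F (u / r)) t = 0 := by
  have hzero : (fun u => F (u / r)) =ᶠ[nhds t] fun _ => 0 := by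
    filter_upwards [(isOpen_lt continuous_const continuous_abs).mem_nhds ht] with u hu
    exact hF _ (by rw [abs_div, abs_of_pos hr, le_div_iff₀ hr, one_mul]; exact hu.le)
  rw [hzero.iteratedDeriv_eq, iteratedDeriv_const]
  split_ifs <;> rfl

end OneVariable

section PartialDerivatives

variable {k : ℕ}

theorem iterate_D1_apply (F : ℝ → ℝ → ℝ) (a : ℕ) (t τ : ℝ) :
    (D1)^[a] F t τ = iteratedDeriv a (fun u => F u τ) t := by
  rw [iteratedDeriv_eq_iterate,
    ← (Function.Semiconj.iterate_right (f := fun G : ℝ → ℝ → ℝ => fun u => G u τ)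
      (ga := D1) (gb := deriv) (fun _ => rfl) a F)]

theorem iterate_D2_apply (F : ℝ → ℝ → ℝ) (a : ℕ) (t τ : ℝ) :
    (D2)^[a] F t τ = iteratedDeriv a (fun u => F t u) τ := by
  rw [iteratedDeriv_eq_iterate,
    ← (Function.Semiconj.iterate_right (f := fun G : ℝ → ℝ → ℝ => fun u => G t u)
      (ga := D2) (gb := deriv) (fun _ => rfl) a F)]

theorem iterate_Dxn_apply (f : Fn k ℝ) (m : ℕ) (x' : Fin k → ℝ) (xn : ℝ) (ξ' : Fin k → ℝ)
    (ξn : ℝ) : (Dxn)^[m] f x' xn ξ' ξn = iteratedDeriv m (fun u => f x' u ξ' ξn) xn := by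
  rw [iteratedDeriv_eq_iterate,
    ← (Function.Semiconj.iterate_right (f := fun g : Fn k ℝ => fun u => g x' u ξ' ξn)
      (ga := Dxn) (gb := deriv) (fun _ => rfl) m f)]

theorem iterate_Dxin_apply (f : Fn k ℝ) (m : ℕ) (x' : Fin k → ℝ) (xn : ℝ) (ξ' : Fin k → ℝ)
    (ξn : ℝ) : (Dxin)^[m] f x' xn ξ' ξn = iteratedDeriv m (fun u => f x' xn ξ' u) ξn := by
  rw [iteratedDeriv_eq_iterate,
    ← (Function.Semiconj.iterate_right (f := fun g : Fn k ℝ => fun u => g x' xn ξ' u)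
      (ga := Dxin) (gb := deriv) (fun _ => rfl) m f)]

variable {f : Fn k ℝ}

theorem ContDiff.slice_xn (hf : ContDiff ℝ (⊤ : ℕ∞) (Fn.unc f)) (x' : Fin k → ℝ)
    (ξ' : Fin k → ℝ) (ξn : ℝ) : ContDiff ℝ (⊤ : ℕ∞) (fun u => f x' u ξ' ξn) :=
  hf.comp (f := fun u : ℝ => (x', u, ξ', ξn)) (by fun_prop)

theorem ContDiff.slice_xin (hf : ContDiff ℝ (⊤ : ℕ∞) (Fn.unc f)) (x' : Fin k → ℝ) (xn : ℝ)
    (ξ' : Fin k → ℝ) : ContDiff ℝ (⊤ : ℕ∞) (fun u => f x' xn ξ' u) :=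
  hf.comp (f := fun u : ℝ => (x', xn, ξ', u)) (by fun_prop)

theorem ContDiff.unc_Dxin (hf : ContDiff ℝ (⊤ : ℕ∞) (Fn.unc f)) :
    ContDiff ℝ (⊤ : ℕ∞) (Fn.unc (Dxin f)) := by
  have h := ContDiff.fderiv_apply (f := fun p (u : ℝ) => Fn.unc f (p.1, p.2.1, p.2.2.1, u))
    (g := fun p : (Fin k → ℝ) × ℝ × (Fin k → ℝ) × ℝ => p.2.2.2) (k := fun _ => 1)
    (hf.comp (by fun_prop)) (n := ((⊤ : ℕ∞) : WithTop ℕ∞)) (by fun_prop) contDiff_const le_rfl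
  simp only [Fn.unc, fderiv_apply_one_eq_deriv] at h
  exact h

theorem ContDiff.unc_iterate_Dxin (hf : ContDiff ℝ (⊤ : ℕ∞) (Fn.unc f)) (m : ℕ) :
    ContDiff ℝ (⊤ : ℕ∞) (Fn.unc ((Dxin)^[m] f)) := by
  induction m with
  | zero => exact hf
  | succ m ih => rw [Function.iterate_succ_apply']; exact ih.unc_Dxin

theorem ContDiff.unc_phiOf {ψ : Fn k ℝ} (hψ : ContDiff ℝ (⊤ : ℕ∞) (Fn.unc ψ)) :
    ContDiff ℝ (⊤ : ℕ∞) (Fn.unc (phiOf ψ)) :=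
  hψ.sub (hψ.comp (f := fun p : (Fin k → ℝ) × ℝ × (Fin k → ℝ) × ℝ => (p.1, 0, p.2.2.1, 0))
    (by fun_prop))

end PartialDerivatives

section PhiOf

variable {k : ℕ} {Ω' : Set (Fin k → ℝ)} {ψ : Fn k ℝ}

theorem Dxn_phiOf (ψ : Fn k ℝ) : Dxn (phiOf ψ) = Dxn ψ := by
  funext x' xn ξ' ξn
  exact deriv_sub_const _

theorem Dxin_phiOf (ψ : Fn k ℝ) : Dxin (phiOf ψ) = Dxin ψ := by
  funext x' xn ξ' ξn
  exact deriv_sub_const _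

theorem iterate_Dxn_iterate_Dxin_phiOf (ψ : Fn k ℝ) (α m : ℕ) :
    (Dxn)^[m + 1] ((Dxin)^[α] (phiOf ψ)) = (Dxn)^[m + 1] ((Dxin)^[α] ψ) := by
  rw [Function.iterate_succ_apply, Function.iterate_succ_apply]
  congr 1
  cases α with
  | zero => exact Dxn_phiOf ψ
  | succ α => rw [Function.iterate_succ_apply, Function.iterate_succ_apply, Dxin_phiOf]

theorem HypB.phiOf_eq_zero (hB : HypB Ω' ψ) (hψ : ContDiff ℝ (⊤ : ℕ∞) (Fn.unc ψ))
    {x' : Fin k → ℝ} (hx' : x' ∈ Ω') (ξ' : Fin k → ℝ) (ξn : ℝ) :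
    phiOf ψ x' 0 ξ' ξn = 0 :=
  sub_eq_zero.2 <| is_const_of_deriv_eq_zero ((hψ.slice_xin x' 0 ξ').differentiable (by simp))
    (hB x' hx' ξ') ξn 0

theorem HypB.iterate_Dxin_phiOf_eq_zero (hB : HypB Ω' ψ) (hψ : ContDiff ℝ (⊤ : ℕ∞) (Fn.unc ψ))
    {x' : Fin k → ℝ} (hx' : x' ∈ Ω') (α : ℕ) (ξ' : Fin k → ℝ) (ξn : ℝ) :
    (Dxin)^[α] (phiOf ψ) x' 0 ξ' ξn = 0 := by
  rw [iterate_Dxin_apply, funext (hB.phiOf_eq_zero hψ hx' ξ'), iteratedDeriv_const]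
  split_ifs <;> rfl

theorem HypS.exists_bound_iterate_Dxn_iterate_Dxin (hS : HypS Ω' ψ) (α N : ℕ) :
    ∃ C > 0, ∀ m ≤ N, ∀ x' ∈ Ω', ∀ xn : ℝ, |xn| ≤ 2 → ∀ (ξ' : Fin k → ℝ) (ξn : ℝ),
      |(Dxn)^[m] ((Dxin)^[α] ψ) x' xn ξ' ξn| ≤ C * jbP ξ' ξn ^ ((1 : ℝ) - α) := by
  have hev : ∀ m, ∀ᶠ C in Filter.atTop, ∀ x' ∈ Ω', ∀ xn : ℝ, |xn| ≤ 2 →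
      ∀ (ξ' : Fin k → ℝ) (ξn : ℝ),
      |(Dxn)^[m] ((Dxin)^[α] ψ) x' xn ξ' ξn| ≤ C * jbP ξ' ξn ^ ((1 : ℝ) - α) := by
    intro m
    obtain ⟨C₀, -, hC₀⟩ := hS α m (fun _ => 0) (fun _ => 0)
    filter_upwards [Filter.eventually_ge_atTop C₀] with C hC x' hx' xn hxn ξ' ξn
    have h := hC₀ x' hx' xn hxn ξ' ξn
    simp only [DxpM, DxipM, Function.iterate_zero, id_eq, List.foldr_fixed, CharP.cast_eq_zero,
      Finset.sum_const_zero, add_zero] at h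
    exact h.trans (by gcongr; exact Real.rpow_nonneg (Real.sqrt_nonneg _) _)
  obtain ⟨C, hC0, hC⟩ := ((Filter.eventually_gt_atTop 0).and
    ((Finset.range (N + 1)).eventually_all.2 fun m _ => hev m)).exists
  exact ⟨C, hC0, fun m hm => hC m (Finset.mem_range_succ_iff.2 hm)⟩

theorem exists_abs_iterate_Dxin_phiOf_le (hψ : ContDiff ℝ (⊤ : ℕ∞) (Fn.unc ψ)) (hS : HypS Ω' ψ)
    (hB : HypB Ω' ψ) (α : ℕ) :
    ∃ C > 0, ∀ x' ∈ Ω', ∀ s : ℝ, |s| ≤ 2 → ∀ (ξ' : Fin k → ℝ) (ξn : ℝ),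
      |(Dxin)^[α] (phiOf ψ) x' s ξ' ξn| ≤ C * |s| * jbP ξ' ξn ^ ((1 : ℝ) - α) := by
  obtain ⟨C, hC0, hC⟩ := hS.exists_bound_iterate_Dxn_iterate_Dxin α 1
  refine ⟨C, hC0, fun x' hx' s hs ξ' ξn => ?_⟩
  have hderiv : ∀ u ∈ Set.Icc (-2 : ℝ) 2,
      ‖deriv (fun u => (Dxin)^[α] (phiOf ψ) x' u ξ' ξn) u‖ ≤ C * jbP ξ' ξn ^ ((1 : ℝ) - α) := by
    intro u hu
    have h := hC 1 le_rfl x' hx' u (abs_le.2 hu) ξ' ξn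
    rwa [← iterate_Dxn_iterate_Dxin_phiOf ψ α 0] at h
  have hmvt := Convex.norm_image_sub_le_of_norm_deriv_le
    (fun u _ => ((hψ.unc_phiOf.unc_iterate_Dxin α).slice_xn x' ξ' ξn).differentiable
      (by simp) u) hderiv (convex_Icc _ _) (by norm_num : (0 : ℝ) ∈ Set.Icc (-2 : ℝ) 2)
    (abs_le.1 hs)
  rw [hB.iterate_Dxin_phiOf_eq_zero hψ hx', sub_zero, sub_zero, Real.norm_eq_abs,
    Real.norm_eq_abs] at hmvt
  linarith

end PhiOf

section RescaledPhase

variable {k : ℕ} {Ω' : Set (Fin k → ℝ)} {ψ : Fn k ℝ}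

def cutoffPart (ψ : Fn k ℝ) (K : ℝ) (x' ξ' : Fin k → ℝ) (α : ℕ) (τ s : ℝ) : ℝ :=
  jbV ξ' ^ α * (Dxin)^[α] (phiOf ψ) x' s ξ' (τ * jbV ξ')
    - K * iteratedDeriv α (fun u : ℝ => u) τ * jbV ξ' * s

theorem iterate_D2_PhiS (hψ : ContDiff ℝ (⊤ : ℕ∞) (Fn.unc ψ)) (ω : ℝ → ℝ) (K : ℝ)
    (x' ξ' : Fin k → ℝ) (α : ℕ) (t τ : ℝ) :
    (D2)^[α] (PhiS ω K ψ x' ξ') t τ = ω (t / jbV ξ') * cutoffPart ψ K x' ξ' α τ (t / jbV ξ')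
      + K * iteratedDeriv α (fun u : ℝ => u) τ * t := by
  rw [iterate_D2_apply]
  simp only [PhiS]
  set r := jbV ξ'
  have hr : r ≠ 0 := (zero_lt_one.trans_le (one_le_jbV ξ')).ne'
  have hslice := (hψ.unc_phiOf).slice_xin x' (t / r) ξ'
  have hdiff : ContDiff ℝ α (fun u => phiOf ψ x' (t / r) ξ' (r * u)) :=
    (hslice.comp (contDiff_const.mul contDiff_id)).of_le (by exact_mod_cast le_top)
  have hsplit : (fun u => ω (t / r) * phiOf ψ x' (t / r) ξ' (u * r)
      + (1 - ω (t / r)) * K * t * u) = fun u =>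
      ω (t / r) * phiOf ψ x' (t / r) ξ' (r * u) + (1 - ω (t / r)) * K * t * u := by
    simp only [mul_comm _ r]
  rw [hsplit, iteratedDeriv_fun_add (contDiffAt_const.mul hdiff.contDiffAt)
    (contDiffAt_const.mul contDiffAt_fun_id), iteratedDeriv_const_mul_field,
    iteratedDeriv_const_mul_field,
    iteratedDeriv_comp_const_mul (hslice.of_le (by exact_mod_cast le_top)) r,
    cutoffPart, iterate_Dxin_apply, mul_comm τ r]
  field_simp
  ring

theorem contDiff_cutoffPart (hψ : ContDiff ℝ (⊤ : ℕ∞) (Fn.unc ψ)) (K : ℝ) (x' ξ' : Fin k → ℝ)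
    (α : ℕ) (τ : ℝ) : ContDiff ℝ (⊤ : ℕ∞) (cutoffPart ψ K x' ξ' α τ) :=
  (contDiff_const.mul ((hψ.unc_phiOf.unc_iterate_Dxin α).slice_xn x' ξ' _)).sub
    (contDiff_const.mul contDiff_id)

theorem exists_abs_cutoffPart_le (hψ : ContDiff ℝ (⊤ : ℕ∞) (Fn.unc ψ)) (hS : HypS Ω' ψ)
    (hB : HypB Ω' ψ) (K : ℝ) (α : ℕ) :
    ∃ C > 0, ∀ x' ∈ Ω', ∀ (ξ' : Fin k → ℝ) (τ s : ℝ), |s| ≤ 2 →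
      |cutoffPart ψ K x' ξ' α τ s| ≤ C * |s| * jbV ξ' * jb τ ^ ((1 : ℝ) - α) := by
  obtain ⟨C, hC0, hC⟩ := exists_abs_iterate_Dxin_phiOf_le hψ hS hB α
  refine ⟨C + |K|, by positivity, fun x' hx' ξ' τ s hs => ?_⟩
  have hr : 0 ≤ jbV ξ' := zero_le_one.trans (one_le_jbV ξ')
  have hφ : jbV ξ' ^ α * |(Dxin)^[α] (phiOf ψ) x' s ξ' (τ * jbV ξ')|
      ≤ C * |s| * jbV ξ' * jb τ ^ ((1 : ℝ) - α) := by
    calc _ ≤ jbV ξ' ^ α * (C * |s| * jbP ξ' (τ * jbV ξ') ^ ((1 : ℝ) - α)) := by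
          gcongr; exact hC x' hx' s hs ξ' _
      _ = C * |s| * jbV ξ' * jb τ ^ ((1 : ℝ) - α) := by
          rw [mul_assoc _ (jbV ξ'), ← jbV_pow_mul_jbP_rpow]; ring
  have hlin : |K * iteratedDeriv α (fun u : ℝ => u) τ * jbV ξ' * s|
      ≤ |K| * |s| * jbV ξ' * jb τ ^ ((1 : ℝ) - α) := by
    rw [abs_mul, abs_mul, abs_mul, abs_of_nonneg hr]
    have := abs_iteratedDeriv_id_le α τ
    have : 0 ≤ |K| * |s| * jbV ξ' := by positivity
    nlinarith
  rw [cutoffPart]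
  refine (abs_sub _ _).trans ?_
  rw [abs_mul, abs_of_nonneg (pow_nonneg hr α)]
  linarith

theorem exists_abs_iteratedDeriv_cutoffPart_le (hψ : ContDiff ℝ (⊤ : ℕ∞) (Fn.unc ψ))
    (hS : HypS Ω' ψ) (hB : HypB Ω' ψ) (K : ℝ) (α N : ℕ) :
    ∃ C > 0, ∀ m ≤ N, ∀ x' ∈ Ω', ∀ (ξ' : Fin k → ℝ) (τ s : ℝ), |s| ≤ 1 →
      |iteratedDeriv m (cutoffPart ψ K x' ξ' α τ) s| ≤ C * jbV ξ' * jb τ ^ ((1 : ℝ) - α) := by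
  obtain ⟨C₀, hC₀, hC₀'⟩ := exists_abs_cutoffPart_le hψ hS hB K α
  obtain ⟨C₁, hC₁, hC₁'⟩ := hS.exists_bound_iterate_Dxn_iterate_Dxin α N
  refine ⟨C₀ + C₁ + |K|, by positivity, fun m hm x' hx' ξ' τ s hs => ?_⟩
  have hr : 0 ≤ jbV ξ' := zero_le_one.trans (one_le_jbV ξ')
  have hY : 0 ≤ jbV ξ' * jb τ ^ ((1 : ℝ) - α) :=
    mul_nonneg hr (jb_rpow_pos τ _).le
  rcases m with _ | m
  · rw [iteratedDeriv_zero]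
    calc _ ≤ C₀ * |s| * jbV ξ' * jb τ ^ ((1 : ℝ) - α) := hC₀' x' hx' ξ' τ s (hs.trans one_le_two)
      _ ≤ (C₀ + C₁ + |K|) * jbV ξ' * jb τ ^ ((1 : ℝ) - α) := by
          rw [mul_assoc, mul_assoc, mul_assoc (_ + _)]
          refine mul_le_mul ?_ (mul_le_of_le_one_left hY hs) (by positivity) (by positivity)
          linarith [abs_nonneg K]
  have hg := (hψ.unc_phiOf.unc_iterate_Dxin α).slice_xn x' ξ' (τ * jbV ξ')
  have hderiv : iteratedDeriv (m + 1) (cutoffPart ψ K x' ξ' α τ) s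
      = jbV ξ' ^ α * (Dxn)^[m + 1] ((Dxin)^[α] ψ) x' s ξ' (τ * jbV ξ')
        - K * iteratedDeriv α (fun u : ℝ => u) τ * jbV ξ'
          * iteratedDeriv (m + 1) (fun u => u) s := by
    rw [← iterate_Dxn_iterate_Dxin_phiOf, iterate_Dxn_apply]
    unfold cutoffPart
    rw [iteratedDeriv_fun_sub
      (contDiffAt_const.mul (hg.of_le (by exact_mod_cast le_top)).contDiffAt)
      (contDiffAt_const.mul contDiffAt_fun_id), iteratedDeriv_const_mul_field,
      iteratedDeriv_const_mul_field]
  have hsym : jbV ξ' ^ α * |(Dxn)^[m + 1] ((Dxin)^[α] ψ) x' s ξ' (τ * jbV ξ')|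
      ≤ C₁ * (jbV ξ' * jb τ ^ ((1 : ℝ) - α)) := by
    calc _ ≤ jbV ξ' ^ α * (C₁ * jbP ξ' (τ * jbV ξ') ^ ((1 : ℝ) - α)) := by
          gcongr; exact hC₁' _ hm x' hx' s (hs.trans one_le_two) ξ' _
      _ = C₁ * (jbV ξ' * jb τ ^ ((1 : ℝ) - α)) := by
          rw [← jbV_pow_mul_jbP_rpow]; ring
  have hlin : |K * iteratedDeriv α (fun u : ℝ => u) τ * jbV ξ'
      * iteratedDeriv (m + 1) (fun u => u) s|
      ≤ |K| * (jbV ξ' * jb τ ^ ((1 : ℝ) - α)) := by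
    rw [abs_mul, abs_mul, abs_mul, abs_of_nonneg hr]
    have h1 := abs_iteratedDeriv_id_le α τ
    have h2 := abs_iteratedDeriv_id_le_one (Nat.succ_ne_zero m) s
    have : 0 ≤ |K| * jbV ξ' := by positivity
    have : 0 ≤ |K| * |iteratedDeriv α (fun u : ℝ => u) τ| * jbV ξ' := by positivity
    nlinarith
  rw [hderiv]
  refine (abs_sub _ _).trans ?_
  rw [abs_mul, abs_of_nonneg (pow_nonneg hr α)]
  nlinarith

theorem exists_abs_iteratedDeriv_cutoff_le (hψ : ContDiff ℝ (⊤ : ℕ∞) (Fn.unc ψ))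
    (hS : HypS Ω' ψ) (hB : HypB Ω' ψ) {ω : ℝ → ℝ} (hω : CutOff ω) (K : ℝ) (a α : ℕ) :
    ∃ C > 0, ∀ x' ∈ Ω', ∀ (ξ' : Fin k → ℝ) (t τ : ℝ),
      |iteratedDeriv a (fun u => ω (u / jbV ξ') * cutoffPart ψ K x' ξ' α τ (u / jbV ξ')) t|
        ≤ C * jb t ^ ((1 : ℝ) - a) * jb τ ^ ((1 : ℝ) - α) := by
  obtain ⟨hωs, -, -, -, hω0⟩ := hω
  obtain ⟨M, hM0, hM⟩ := hωs.exists_abs_iteratedDeriv_le_of_abs_le_one a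
  obtain ⟨C₀, hC₀, hC₀'⟩ := exists_abs_cutoffPart_le hψ hS hB K α
  obtain ⟨C₁, hC₁, hC₁'⟩ := exists_abs_iteratedDeriv_cutoffPart_le hψ hS hB K α a
  refine ⟨4 ^ a * M * (C₀ + C₁), by positivity, fun x' hx' ξ' t τ => ?_⟩
  have hC₀x := hC₀' x' hx' ξ' τ
  have hC₁x := fun j hj => hC₁' j hj x' hx' ξ' τ
  set r := jbV ξ'
  have hr : 1 ≤ r := one_le_jbV ξ'
  have hr0 : 0 < r := zero_lt_one.trans_le hr
  have hX := jb_rpow_pos t ((1 : ℝ) - a)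
  have hY := jb_rpow_pos τ ((1 : ℝ) - α)
  rcases lt_or_ge r |t| with ht | ht
  · rw [iteratedDeriv_comp_div_eq_zero (F := fun s => ω s * cutoffPart ψ K x' ξ' α τ s)
      (fun s hs => by simp [hω0 s hs]) a hr0 ht, abs_zero]
    positivity
  have hs : |t / r| ≤ 1 := by rwa [abs_div, abs_of_pos hr0, div_le_one hr0]
  rw [iteratedDeriv_comp_div (F := fun s => ω s * cutoffPart ψ K x' ξ' α τ s)
    (hωs.mul (contDiff_cutoffPart hψ K x' ξ' α τ))]
  rcases a with _ | a
  · have hωt : |ω (t / r)| ≤ M := by simpa using hM 0 le_rfl (t / r) hs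
    have hht := hC₀x (t / r) (hs.trans one_le_two)
    rw [abs_div, abs_of_pos hr0, mul_assoc C₀, div_mul_cancel₀ _ hr0.ne'] at hht
    have htjb : C₀ * |t| ≤ (C₀ + C₁) * jb t :=
      mul_le_mul (by linarith) (abs_le_jb t) (abs_nonneg t) (by positivity)
    simp only [pow_zero, one_mul, iteratedDeriv_zero, CharP.cast_eq_zero, sub_zero,
      Real.rpow_one, abs_mul]
    calc |ω (t / r)| * |cutoffPart ψ K x' ξ' α τ (t / r)|
        ≤ M * (C₀ * |t| * jb τ ^ ((1 : ℝ) - α)) :=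
          mul_le_mul hωt hht (abs_nonneg _) hM0.le
      _ ≤ M * ((C₀ + C₁) * jb t * jb τ ^ ((1 : ℝ) - α)) := by gcongr
      _ = _ := by ring
  · have hLeibniz := abs_iteratedDeriv_mul_le (a := a + 1) (s := t / r)
      (hωs.of_le (by exact_mod_cast le_top)).contDiffAt
      ((contDiff_cutoffPart hψ K x' ξ' α τ).of_le (by exact_mod_cast le_top)).contDiffAt
      (fun j hj => hM j hj _ hs) (fun j hj => hC₁x j hj _ hs)
    have hscale : (r⁻¹) ^ (a + 1) * r = r ^ ((1 : ℝ) - (a + 1 : ℕ)) := by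
      rw [Real.rpow_sub hr0, Real.rpow_one, Real.rpow_natCast, inv_pow, inv_mul_eq_div]
    have hrt := rpow_one_sub_le_two_pow_mul_jb_rpow hr ht (a := a + 1) (by omega)
    rw [abs_mul, abs_of_pos (by positivity)]
    calc _ ≤ (r⁻¹) ^ (a + 1) * (2 ^ (a + 1) * M * (C₁ * r * jb τ ^ ((1 : ℝ) - α))) := by
          gcongr
      _ = 2 ^ (a + 1) * M * C₁ * jb τ ^ ((1 : ℝ) - α) * r ^ ((1 : ℝ) - (a + 1 : ℕ)) := by
          rw [← hscale]; ring
      _ ≤ 2 ^ (a + 1) * M * C₁ * jb τ ^ ((1 : ℝ) - α)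
            * (2 ^ (a + 1) * jb t ^ ((1 : ℝ) - (a + 1 : ℕ))) := by gcongr
      _ ≤ 4 ^ (a + 1) * M * (C₀ + C₁) * jb t ^ ((1 : ℝ) - (a + 1 : ℕ)) * jb τ ^ ((1 : ℝ) - α) := by
          rw [show (4 : ℝ) ^ (a + 1) = 2 ^ (a + 1) * 2 ^ (a + 1) by rw [← mul_pow]; norm_num]
          have hXY := mul_pos hX hY
          have hP : 0 ≤ 2 ^ (a + 1) * 2 ^ (a + 1) * M
              * (jb t ^ ((1 : ℝ) - (a + 1 : ℕ)) * jb τ ^ ((1 : ℝ) - α)) := by positivity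
          nlinarith

end RescaledPhase

theorem statement0_general {n : ℕ}
    (Ω' : Set (Fin (n - 1) → ℝ))
    (U' : Set (Fin (n - 1) → ℝ)) (hUΩ : U' ⊆ Ω')
    (ψ : Fn (n - 1) ℝ) (hψ : ContDiff ℝ (⊤ : ℕ∞) (Fn.unc ψ))
    (hS : HypS Ω' ψ) (hB : HypB Ω' ψ)
    (ω : ℝ → ℝ) (hω : CutOff ω)
    (K : ℝ) (a α : ℕ) :
    ∃ C > 0, ∀ x' ∈ U', ∀ (ξ' : Fin (n - 1) → ℝ) (t τ : ℝ),
      |(D1)^[a] ((D2)^[α] (PhiS ω K ψ x' ξ')) t τ| ≤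
        C * jb t ^ ((1 : ℝ) - (a : ℝ)) * jb τ ^ ((1 : ℝ) - (α : ℝ)) := by
  obtain ⟨C, hC0, hC⟩ := exists_abs_iteratedDeriv_cutoff_le hψ hS hB hω K a α
  refine ⟨C + |K|, by positivity, fun x' hx' ξ' t τ => ?_⟩
  have hcut : ContDiff ℝ a fun u => ω (u / jbV ξ') * cutoffPart ψ K x' ξ' α τ (u / jbV ξ') :=
    ((hω.1.mul (contDiff_cutoffPart hψ K x' ξ' α τ)).comp
      (contDiff_id.div_const _)).of_le (by exact_mod_cast le_top)
  rw [iterate_D1_apply, funext fun u => iterate_D2_PhiS hψ ω K x' ξ' α u τ,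
    iteratedDeriv_fun_add hcut.contDiffAt (contDiffAt_const.mul contDiffAt_fun_id),
    iteratedDeriv_const_mul_field]
  have hlin : |K * iteratedDeriv α (fun u : ℝ => u) τ * iteratedDeriv a (fun u : ℝ => u) t|
      ≤ |K| * jb t ^ ((1 : ℝ) - a) * jb τ ^ ((1 : ℝ) - α) := by
    rw [abs_mul, abs_mul, mul_right_comm]
    exact mul_le_mul (mul_le_mul_of_nonneg_left (abs_iteratedDeriv_id_le a t) (abs_nonneg K))
      (abs_iteratedDeriv_id_le α τ) (abs_nonneg _) (mul_nonneg (abs_nonneg K) (jb_rpow_pos t _).le)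
  calc _ ≤ _ := abs_add_le _ _
    _ ≤ C * jb t ^ ((1 : ℝ) - a) * jb τ ^ ((1 : ℝ) - α)
        + |K| * jb t ^ ((1 : ℝ) - a) * jb τ ^ ((1 : ℝ) - α) :=
      add_le_add (hC x' (hUΩ hx') ξ' t τ) hlin
    _ = _ := by ring

/-- (P1) of Theorem 1.2: under (S) and (B), the rescaled phase `*Φ` satisfies the
SG estimates `|∂ₜ^a ∂_τ^α *Φ(t,τ)| ≤ C ⟨t⟩^{1-a} ⟨τ⟩^{1-α}` with `C` independent of
`(x', ξ') ∈ U' × ℝ^{n-1}`. -/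
theorem statement0 {n : ℕ} (hn : 2 ≤ n)
    (Ω' : Set (Fin (n - 1) → ℝ)) (hΩ' : IsOpen Ω')
    (U' : Set (Fin (n - 1) → ℝ)) (hU' : IsCompact U') (hUΩ : U' ⊆ Ω')
    (ψ : Fn (n - 1) ℝ) (hψ : ContDiff ℝ (⊤ : ℕ∞) (Fn.unc ψ))
    (hS : HypS Ω' ψ) (hB : HypB Ω' ψ)
    (ω : ℝ → ℝ) (hω : CutOff ω)
    (K : ℝ) (hK : 0 < K) (a α : ℕ) :
    ∃ C > 0, ∀ x' ∈ U', ∀ (ξ' : Fin (n - 1) → ℝ) (t τ : ℝ),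
      |(D1)^[a] ((D2)^[α] (PhiS ω K ψ x' ξ')) t τ| ≤
        C * jb t ^ ((1 : ℝ) - (a : ℝ)) * jb τ ^ ((1 : ℝ) - (α : ℝ)) :=
  statement0_general Ω' U' hUΩ ψ hψ hS hB ω hω K a α
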